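/- For every θ with 0 < θ ≤ 4/3, setting S = θ³/8 and η = θ²/4, one has S/θ + h2(1/2 − 3θ/8) < 1 − η; that is, θ²/8 + h2(1/2 − 3θ/8) < 1 − θ²/4. -/

import Mathlib

/-!
Since `h2 = binEntropy / log 2`, it suffices to bound the natural-log entropy quadratically near
`1/2`: `binEntropy (1/2 - x) ≤ log 2 - 2 x²` for `|x| ≤ 1/2`, because the derivative
`4x - log ((1 + 2x) / (1 - 2x))` of `binEntropy (1/2 - x) + 2 x²` is nonpositive for `x ≥ 0`.
At `x = 3θ/8` this gives `h2 (1/2 - 3θ/8) ≤ 1 - 9θ² / (32 log 2)`, and `9 / (32 log 2) > 3/8`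
because `log 2 < 3/4`.
-/

/-- Binary entropy (base 2), with the conventions `h2 0 = h2 1 = 0`
(automatic since `Real.log 0 = 0`). -/
noncomputable def h2 (y : ℝ) : ℝ := -(y * Real.logb 2 y) - (1 - y) * Real.logb 2 (1 - y)

open Real

lemma two_mul_le_log_one_add_div_one_sub {x : ℝ} (h₀ : 0 ≤ x) (h₁ : x < 1) :
    2 * x ≤ log ((1 + x) / (1 - x)) := by
  have := sum_range_le_log_div h₀ h₁ 1
  norm_num at this
  linarith

lemma binEntropy_two_inv_sub_le_of_nonneg {x : ℝ} (h₀ : 0 ≤ x) (h₁ : x ≤ 2⁻¹) :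
    binEntropy (2⁻¹ - x) ≤ log 2 - 2 * x ^ 2 := by
  set F : ℝ → ℝ := fun y ↦ binEntropy (2⁻¹ - y) + 2 * y ^ 2
  have hF : AntitoneOn F (Set.Icc 0 2⁻¹) := by
    refine antitoneOn_of_hasDerivWithinAt_nonpos (convex_Icc _ _) (by fun_prop)
      (f' := fun y ↦ 4 * y - (log (2⁻¹ + y) - log (2⁻¹ - y))) ?_ ?_
    · intro y hy
      rw [interior_Icc] at hy
      have hp₀ : 2⁻¹ - y ≠ 0 := by linarith [hy.2]
      have hp₁ : 2⁻¹ - y ≠ 1 := by linarith [hy.1]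
      have := ((hasDerivAt_binEntropy hp₀ hp₁).comp y ((hasDerivAt_id y).const_sub 2⁻¹)).add
        ((hasDerivAt_pow 2 y).const_mul 2)
      refine (this.congr_deriv ?_).hasDerivWithinAt
      ring_nf
    · intro y hy
      rw [interior_Icc] at hy
      have hlog : log (2⁻¹ + y) - log (2⁻¹ - y) = log ((1 + 2 * y) / (1 - 2 * y)) := by
        rw [← log_div (by linarith [hy.1]) (by linarith [hy.2])]
        congr 1
        field_simp
      have := two_mul_le_log_one_add_div_one_sub (x := 2 * y) (by linarith [hy.1])
        (by linarith [hy.2])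
      linarith
  have := hF ⟨le_rfl, by norm_num⟩ ⟨h₀, h₁⟩ h₀
  simp only [F, sub_zero, binEntropy_two_inv] at this
  linarith

lemma binEntropy_two_inv_sub_le {x : ℝ} (hx : |x| ≤ 2⁻¹) :
    binEntropy (2⁻¹ - x) ≤ log 2 - 2 * x ^ 2 := by
  rcases le_total 0 x with h₀ | h₀
  · exact binEntropy_two_inv_sub_le_of_nonneg h₀ (by rwa [abs_of_nonneg h₀] at hx)
  · rw [← neg_sq, ← binEntropy_two_inv_add, ← sub_neg_eq_add]
    exact binEntropy_two_inv_sub_le_of_nonneg (neg_nonneg.2 h₀) (by rwa [abs_of_nonpos h₀] at hx)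

lemma h2_eq_binEntropy_div_log_two (y : ℝ) : h2 y = binEntropy y / log 2 := by
  simp only [h2, binEntropy, logb, log_inv]
  ring

lemma h2_two_inv_sub_le {x : ℝ} (hx : |x| ≤ 2⁻¹) : h2 (2⁻¹ - x) ≤ 1 - 2 * x ^ 2 / log 2 := by
  have hlog : 0 < log 2 := log_pos one_lt_two
  rw [h2_eq_binEntropy_div_log_two, div_le_iff₀ hlog, sub_mul, div_mul_cancel₀ _ hlog.ne', one_mul]
  exact binEntropy_two_inv_sub_le hx

/-- For every `θ` with `0 < θ ≤ 4/3`, setting `S = θ³/8` and `η = θ²/4`,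
one has `S/θ + h2(1/2 − 3θ/8) < 1 − η`, i.e. `θ²/8 + h2(1/2 − 3θ/8) < 1 − θ²/4`. -/
theorem theta_entropy_bound :
    ∀ θ : ℝ, 0 < θ → θ ≤ 4/3 →
      (θ^3/8) / θ + h2 (1/2 - 3*θ/8) < 1 - θ^2/4 ∧
      θ^2/8 + h2 (1/2 - 3*θ/8) < 1 - θ^2/4 := by
  intro θ hθ₀ hθ₁
  have hcube : (θ^3/8) / θ = θ^2/8 := by field_simp
  rw [hcube, and_self, one_div]
  have hent : h2 (2⁻¹ - 3*θ/8) ≤ 1 - 2 * (3*θ/8) ^ 2 / log 2 :=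
    h2_two_inv_sub_le (by rw [abs_of_pos (by positivity)]; linarith)
  have hgap : 3 * θ^2 / 8 < 2 * (3*θ/8) ^ 2 / log 2 := by
    rw [lt_div_iff₀ (log_pos one_lt_two)]
    nlinarith [log_two_lt_d9, pow_pos hθ₀ 2]
  linarith
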